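/- Let λ = e^{2πiθ} with θ Diophantine and let g be entire with g(0) = g'(0) = 0, g(w) = ∑_{ℓ≥2} d_ℓ w^ℓ. Define h(u,w) = λ^{−1} ∑_{ℓ=2}^{∞} d_ℓ w^ℓ ∑_{k=0}^{∞} λ^{(ℓ−1)k}/(u+k). Then for every δ > 0 there exists R > 0 such that the map Φ(u,w) = (u, w + h(u,w)) is injective on {(u,w) : Re(u) > R, |w| < δ}. -/

import Mathlib

/-!
With `p = ⌈r⌉`, the Diophantine condition bounds the partial sums of `∑ₖ (λ^(ℓ-1))^k` by
`2 / ‖λ^(ℓ-1) - 1‖ ≤ (2/c) ℓ^p`, so Abel summation against the decreasing weights `1/(u+k)`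
gives `‖∑ₖ λ^((ℓ-1)k) / (u+k)‖ ≤ (2/c) ℓ^p / Re u`. Convergence of the series of `g` at `2δ`
gives `‖d_ℓ‖ ≤ D / (2δ)^ℓ`, and `‖w^ℓ - w'^ℓ‖ ≤ ℓ δ^(ℓ-1) ‖w - w'‖` on the `δ`-ball; the
leftover factor `2^(-ℓ)` absorbs the polynomial growth, so `w ↦ h(u,w)` is Lipschitz with
constant `L / Re u`. Once `Re u > L`, the map `w ↦ w + h(u,w)` is a perturbation of the
identity by a strict contraction, hence injective.
-/

open Filter Finset

lemma norm_pow_sub_pow_le {R : Type*} [NormedCommRing R] [NormOneClass R] {w w' : R} {ρ : ℝ}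
    (hw : ‖w‖ ≤ ρ) (hw' : ‖w'‖ ≤ ρ) (n : ℕ) :
    ‖w ^ n - w' ^ n‖ ≤ n * ρ ^ (n - 1) * ‖w - w'‖ := by
  have hρ : 0 ≤ ρ := (norm_nonneg w).trans hw
  rw [← geom_sum₂_mul]
  refine (norm_mul_le _ _).trans (mul_le_mul_of_nonneg_right ?_ (norm_nonneg _))
  calc ‖∑ i ∈ range n, w ^ i * w' ^ (n - 1 - i)‖
      ≤ ∑ i ∈ range n, ρ ^ (n - 1) := by
        refine (norm_sum_le _ _).trans (sum_le_sum fun i hi => ?_)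
        calc ‖w ^ i * w' ^ (n - 1 - i)‖ ≤ ‖w‖ ^ i * ‖w'‖ ^ (n - 1 - i) :=
              (norm_mul_le _ _).trans (mul_le_mul (norm_pow_le _ _) (norm_pow_le _ _)
                (norm_nonneg _) (by positivity))
          _ ≤ ρ ^ i * ρ ^ (n - 1 - i) := by gcongr
          _ = ρ ^ (n - 1) := by rw [← pow_add]; congr 1; have := mem_range.mp hi; omega
    _ = n * ρ ^ (n - 1) := by simp

lemma norm_geom_sum_le {K : Type*} [NormedDivisionRing K] {μ : K} (hμ : ‖μ‖ ≤ 1) (hμ₁ : μ ≠ 1)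
    (n : ℕ) : ‖∑ k ∈ range n, μ ^ k‖ ≤ 2 / ‖μ - 1‖ := by
  rw [geom_sum_eq hμ₁, norm_div]
  gcongr
  calc ‖μ ^ n - 1‖ ≤ ‖μ‖ ^ n + ‖(1 : K)‖ := by rw [← norm_pow]; exact norm_sub_le _ _
    _ ≤ 2 := by rw [norm_one]; linarith [pow_le_one₀ (norm_nonneg μ) hμ (n := n)]

lemma norm_sum_range_smul_le {𝕜 E : Type*} [NormedField 𝕜] [NormedAddCommGroup E]
    [NormedSpace 𝕜 E] {a : ℕ → E} {b : ℕ → 𝕜} {β : ℕ → ℝ} {M : ℝ}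
    (ha : ∀ n, ‖∑ k ∈ range n, a k‖ ≤ M) (hb : ∀ k, ‖b k‖ ≤ β k)
    (hβ : ∀ k, ‖b (k + 1) - b k‖ ≤ β k - β (k + 1)) (n : ℕ) :
    ‖∑ k ∈ range n, b k • a k‖ ≤ M * β 0 := by
  rw [sum_range_by_parts]
  calc _ ≤ ‖b (n - 1) • ∑ k ∈ range n, a k‖
        + ∑ i ∈ range (n - 1), ‖(b (i + 1) - b i) • ∑ k ∈ range (i + 1), a k‖ :=
        (norm_sub_le _ _).trans (add_le_add_right (norm_sum_le _ _) _)
    _ ≤ β (n - 1) * M + ∑ i ∈ range (n - 1), (β i - β (i + 1)) * M := by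
        gcongr with i
        · exact (norm_smul_le _ _).trans (mul_le_mul (hb _) (ha n) (norm_nonneg _)
            ((norm_nonneg _).trans (hb _)))
        · exact (norm_smul_le _ _).trans (mul_le_mul (hβ i) (ha _) (norm_nonneg _)
            ((norm_nonneg _).trans (hβ i)))
    _ = M * β 0 := by rw [← sum_mul, sum_range_sub']; ring

lemma re_add_natCast_le_norm (u : ℂ) (k : ℕ) : u.re + k ≤ ‖u + k‖ := by
  simpa using Complex.re_le_norm (u + k)

lemma norm_inv_add_natCast_le {u : ℂ} (hu : 0 < u.re) (k : ℕ) :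
    ‖(u + k)⁻¹‖ ≤ (u.re + k)⁻¹ := by
  rw [norm_inv]
  exact inv_anti₀ (by positivity) (re_add_natCast_le_norm u k)

lemma norm_inv_add_natCast_succ_sub_le {u : ℂ} (hu : 0 < u.re) (k : ℕ) :
    ‖(u + (k + 1 : ℕ))⁻¹ - (u + k)⁻¹‖ ≤ (u.re + k)⁻¹ - (u.re + (k + 1 : ℕ))⁻¹ := by
  have hpos : ∀ j : ℕ, 0 < u.re + j := fun j => by positivity
  have hne : ∀ j : ℕ, u + j ≠ 0 := fun j h0 => by
    have := re_add_natCast_le_norm u j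
    rw [h0, norm_zero] at this
    linarith [hpos j]
  rw [inv_sub_inv (hne _) (hne _), inv_sub_inv (hpos _).ne' (hpos _).ne', norm_div, norm_mul]
  push_cast
  have h₁ := re_add_natCast_le_norm u (k + 1)
  push_cast at h₁
  rw [add_sub_add_left_eq_sub, add_sub_add_left_eq_sub, show (k : ℂ) - (k + 1) = -1 by ring,
    norm_neg, norm_one, add_sub_cancel_left, mul_comm ‖u + (k + 1)‖]
  gcongr
  exact re_add_natCast_le_norm u k

lemma norm_sum_div_add_natCast_le {a : ℕ → ℂ} {M : ℝ} (ha : ∀ n, ‖∑ k ∈ range n, a k‖ ≤ M)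
    {u : ℂ} (hu : 0 < u.re) (n : ℕ) : ‖∑ k ∈ range n, a k / (u + k)‖ ≤ M / u.re := by
  calc _ = ‖∑ k ∈ range n, (u + k)⁻¹ • a k‖ := by simp only [smul_eq_mul, div_eq_inv_mul]
    _ ≤ M * (u.re + (0 : ℕ))⁻¹ :=
      norm_sum_range_smul_le ha (norm_inv_add_natCast_le hu) (norm_inv_add_natCast_succ_sub_le hu) n
    _ = M / u.re := by simp [div_eq_mul_inv]

lemma div_pow_natCeil_le_mul_rpow_neg {c r : ℝ} (hc : 0 ≤ c) {n : ℕ} (hn : 1 ≤ n) :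
    c / n ^ ⌈r⌉₊ ≤ c * (n : ℝ) ^ (-r) := by
  have hn' : (1 : ℝ) ≤ n := by exact_mod_cast hn
  rw [Real.rpow_neg n.cast_nonneg, div_eq_mul_inv, ← Real.rpow_natCast]
  gcongr
  exact Nat.le_ceil r

section Diophantine

variable {l : ℂ} {c : ℝ} {p : ℕ}

lemma norm_geom_sum_pow_le_of_diophantine (hl : ‖l‖ = 1) (hc : 0 < c)
    (hdio : ∀ n : ℕ, 1 ≤ n → c / n ^ p ≤ ‖l ^ n - 1‖) {m : ℕ} (hm : 1 ≤ m) (N : ℕ) :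
    ‖∑ k ∈ range N, (l ^ m) ^ k‖ ≤ 2 / c * m ^ p := by
  have hlower : 0 < c / m ^ p := by
    have : (0 : ℝ) < m := by exact_mod_cast hm
    exact div_pos hc (pow_pos this p)
  have hne : l ^ m ≠ 1 := fun h1 => by
    have := hdio m hm
    rw [h1, sub_self, norm_zero] at this
    linarith
  calc _ ≤ 2 / ‖l ^ m - 1‖ := norm_geom_sum_le (by rw [norm_pow, hl, one_pow]) hne N
    _ ≤ 2 / (c / m ^ p) := by gcongr; exact hdio m hm
    _ = 2 / c * m ^ p := by field_simp

lemma norm_le_of_tendsto_sum_pow_div (hl : ‖l‖ = 1) (hc : 0 < c)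
    (hdio : ∀ n : ℕ, 1 ≤ n → c / n ^ p ≤ ‖l ^ n - 1‖) {m : ℕ} (hm : 1 ≤ m) {u σ : ℂ}
    (hu : 0 < u.re)
    (hσ : Tendsto (fun N : ℕ => ∑ k ∈ range N, l ^ (m * k) / (u + k)) atTop (nhds σ)) :
    ‖σ‖ ≤ 2 / c * m ^ p / u.re := by
  refine le_of_tendsto' hσ.norm fun N => ?_
  simp only [pow_mul]
  exact norm_sum_div_add_natCast_le (norm_geom_sum_pow_le_of_diophantine hl hc hdio hm) hu N

end Diophantine

lemma exists_norm_mul_pow_le_of_summable {K : Type*} [NormedDivisionRing K] {a : ℕ → K} {z : K}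
    (h : Summable fun n => a n * z ^ n) : ∃ D, ∀ n, ‖a n‖ * ‖z‖ ^ n ≤ D := by
  obtain ⟨D, hD⟩ := h.tendsto_atTop_zero.norm.bddAbove_range
  exact ⟨D, fun n => by simpa [norm_mul, norm_pow] using hD (Set.mem_range_self n)⟩

lemma norm_sub_le_of_hasSum_mul_pow {𝕜 : Type*} [NormedField 𝕜] {a : ℕ → 𝕜} {w w' F F' : 𝕜}
    {δ C : ℝ} {p : ℕ} (hδ : 0 < δ) (hw : ‖w‖ ≤ δ) (hw' : ‖w'‖ ≤ δ)
    (ha : ∀ n, ‖a n‖ * (2 * δ) ^ n ≤ C * n ^ p)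
    (hF : HasSum (fun n => a n * w ^ n) F) (hF' : HasSum (fun n => a n * w' ^ n) F') :
    ‖F - F'‖ ≤ C / δ * (∑' n : ℕ, (n : ℝ) ^ (p + 1) * (1 / 2) ^ n) * ‖w - w'‖ := by
  have hgeom : Summable fun n : ℕ => (n : ℝ) ^ (p + 1) * (1 / 2) ^ n :=
    summable_pow_mul_geometric_of_norm_lt_one _ (by norm_num)
  rw [mul_right_comm, ← tsum_mul_left]
  refine (hF.sub hF').norm_le_of_bounded (hgeom.mul_left _).hasSum fun n => ?_
  rw [← mul_sub, norm_mul]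
  rcases n with _ | k
  · simp
  calc ‖a (k + 1)‖ * ‖w ^ (k + 1) - w' ^ (k + 1)‖
      ≤ ‖a (k + 1)‖ * ((k + 1 : ℕ) * δ ^ k * ‖w - w'‖) := by
        gcongr; exact norm_pow_sub_pow_le hw hw' (k + 1)
    _ = ‖a (k + 1)‖ * (2 * δ) ^ (k + 1) * ((k + 1 : ℕ) * ‖w - w'‖ / (2 ^ (k + 1) * δ)) := by
        field_simp; ring
    _ ≤ C * (k + 1 : ℕ) ^ p * ((k + 1 : ℕ) * ‖w - w'‖ / (2 ^ (k + 1) * δ)) :=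
        mul_le_mul_of_nonneg_right (ha (k + 1)) (by positivity)
    _ = C / δ * ‖w - w'‖ * ((k + 1 : ℕ) ^ (p + 1) * (1 / 2) ^ (k + 1)) := by
        rw [one_div_pow]; field_simp; ring

lemma injOn_prod_add_of_lipschitz {α E : Type*} [NormedAddCommGroup E] {S : Set (α × E)}
    {h : α × E → E}
    (hh : ∀ x ∈ S, ∀ y ∈ S, x.1 = y.1 → ∃ κ < 1, ‖h x - h y‖ ≤ κ * ‖x.2 - y.2‖) :
    S.InjOn fun x => (x.1, x.2 + h x) := by
  intro x hx y hy hxy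
  obtain ⟨h₁, h₂⟩ := Prod.ext_iff.mp hxy
  obtain ⟨κ, hκ, hle⟩ := hh x hx y hy h₁
  have hdiff : x.2 - y.2 = h y - h x := by
    rw [sub_eq_sub_iff_add_eq_add, add_comm (h y)]
    exact h₂
  rw [norm_sub_rev, ← hdiff] at hle
  have : ‖x.2 - y.2‖ = 0 := by nlinarith [norm_nonneg (x.2 - y.2)]
  exact Prod.ext h₁ (sub_eq_zero.mp (norm_eq_zero.mp this))

/-- For `g(w) = ∑_{ℓ≥2} d_ℓ w^ℓ` entire and
`h(u,w) = λ⁻¹ ∑_{ℓ≥2} d_ℓ w^ℓ ∑_{k≥0} λ^{(ℓ−1)k}/(u+k)`, the map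
`Φ(u,w) = (u, w + h(u,w))` is injective on `{Re u > R, |w| < δ}` for `R` large. -/
theorem stmt7 (θ : ℝ) (l : ℂ) (hl : l = Complex.exp (2 * Real.pi * Complex.I * θ))
    (hdio : ∃ c r : ℝ, 0 < c ∧ 0 < r ∧ ∀ n : ℕ, 1 ≤ n →
      c * (n : ℝ) ^ (-r) ≤ ‖l ^ n - 1‖)
    (d : ℕ → ℂ) (g : ℂ → ℂ)
    (hg : ∀ w : ℂ, HasSum (fun ℓ : ℕ => (if ℓ < 2 then 0 else d ℓ) * w ^ ℓ) (g w))
    (s : ℕ → ℂ → ℂ)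
    (hs : ∀ ℓ : ℕ, 2 ≤ ℓ → ∀ u : ℂ, 1 < u.re →
      Tendsto (fun N : ℕ => ∑ k ∈ Finset.range N, l ^ ((ℓ - 1) * k) / (u + k))
        atTop (nhds (s ℓ u)))
    (h : ℂ × ℂ → ℂ)
    (hh : ∀ u w : ℂ, 1 < u.re →
      HasSum (fun ℓ : ℕ => l⁻¹ * ((if ℓ < 2 then 0 else d ℓ) * w ^ ℓ * s ℓ u)) (h (u, w)))
    (δ : ℝ) (hδ : 0 < δ) :
    ∃ R : ℝ, 0 < R ∧
      Set.InjOn (fun p : ℂ × ℂ => (p.1, p.2 + h p))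
        {p : ℂ × ℂ | R < p.1.re ∧ ‖p.2‖ < δ} := by
  obtain ⟨c, r, hc, -, hdio⟩ := hdio
  have hl₁ : ‖l‖ = 1 := by simp [hl, Complex.norm_exp]
  have hdio' : ∀ n : ℕ, 1 ≤ n → c / n ^ ⌈r⌉₊ ≤ ‖l ^ n - 1‖ := fun n hn =>
    (div_pow_natCeil_le_mul_rpow_neg hc.le hn).trans (hdio n hn)
  have hs_le : ∀ ℓ : ℕ, 2 ≤ ℓ → ∀ u : ℂ, 1 < u.re → ‖s ℓ u‖ ≤ 2 / c * ℓ ^ ⌈r⌉₊ / u.re :=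
    fun ℓ hℓ u hu => (norm_le_of_tendsto_sum_pow_div hl₁ hc hdio' (by omega) (by linarith)
      (hs ℓ hℓ u hu)).trans (by gcongr; omega)
  obtain ⟨D, hD⟩ := exists_norm_mul_pow_le_of_summable (hg ((2 * δ : ℝ) : ℂ)).summable
  rw [Complex.norm_real, Real.norm_of_nonneg (by positivity)] at hD
  have hD₀ : 0 ≤ D := by simpa using hD 0
  have hcoeff : ∀ u : ℂ, 1 < u.re → ∀ ℓ : ℕ,
      ‖l⁻¹ * (if ℓ < 2 then 0 else d ℓ) * s ℓ u‖ * (2 * δ) ^ ℓ ≤ D * (2 / c) / u.re * ℓ ^ ⌈r⌉₊ := by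
    intro u hu ℓ
    split_ifs with hℓ
    · simp only [mul_zero, zero_mul, norm_zero]; positivity
    rw [norm_mul, norm_mul, norm_inv, hl₁, inv_one, one_mul, mul_right_comm]
    calc _ ≤ D * (2 / c * ℓ ^ ⌈r⌉₊ / u.re) := by
          simpa [hℓ] using mul_le_mul (hD ℓ) (hs_le ℓ (by omega) u hu) (norm_nonneg _) hD₀
      _ = _ := by ring
  set L := D * (2 / c) / δ * ∑' n : ℕ, (n : ℝ) ^ (⌈r⌉₊ + 1) * (1 / 2) ^ n
  refine ⟨max L 1, by positivity, injOn_prod_add_of_lipschitz ?_⟩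
  rintro ⟨u, w⟩ ⟨hu, hw⟩ ⟨u', w'⟩ ⟨-, hw'⟩ (rfl : u = u')
  have hu₁ : 1 < u.re := (le_max_right _ _).trans_lt hu
  have hterm : ∀ v : ℂ, HasSum (fun ℓ => l⁻¹ * (if ℓ < 2 then 0 else d ℓ) * s ℓ u * v ^ ℓ)
      (h (u, v)) := fun v => by
    convert hh u v hu₁ using 2 with ℓ
    ring
  refine ⟨L / u.re, (div_lt_one (by linarith)).mpr ((le_max_left _ _).trans_lt hu), ?_⟩
  calc _ ≤ D * (2 / c) / u.re / δ * (∑' n : ℕ, (n : ℝ) ^ (⌈r⌉₊ + 1) * (1 / 2) ^ n) * ‖w - w'‖ :=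
        norm_sub_le_of_hasSum_mul_pow hδ hw.le hw'.le (hcoeff u hu₁) (hterm w) (hterm w')
    _ = L / u.re * ‖w - w'‖ := by ring
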